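/- Let V be a nonempty countable set and b : P(V) → [0,∞] satisfy conditions (0), (1) symmetry, (2) submodularity, (3) monotone-continuity, and (4) finiteness of λ_b. For an optimal cut X, define the relation ≺_X on X by: u ≺_X v iff X_{u,v} ⊄ X, where X_{u,v} is the ⊆-smallest optimal u-v cut. Then ≺_X is a strict partial ordering on X (irreflexive and transitive). -/

import Mathlib

open Set Filter Topology ENNReal

noncomputable section

/-- `λ_b(u,v)`: the infimum of `b(X)` over all `u-v` cuts `X`
(sets with `u ∈ X` and `v ∉ X`). -/
def lamB {V : Type*} (b : Set V → ℝ≥0∞) (u v : V) : ℝ≥0∞ :=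
  ⨅ (X : Set V) (_ : u ∈ X ∧ v ∉ X), b X

/-- `X` is an optimal `u-v` cut: a `u-v` cut with `b(X) = λ_b(u,v)`. -/
def IsOptCut {V : Type*} (b : Set V → ℝ≥0∞) (u v : V) (X : Set V) : Prop :=
  u ∈ X ∧ v ∉ X ∧ b X = lamB b u v

/-!
Everything rests on one uncrossing step. Let `M` be the smallest optimal `p-q` cut and let `Z`
be a set with `p ∈ Z` that costs no more than `λ_b(a,c)` for some `a ∈ Z`, `c ∉ M ∪ Z`. Then
`M ∪ Z` is an `a-c` cut, so submodularity makes `M ∩ Z` an optimal `p-q` cut, and `M ⊆ Z`.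
Taking `Z = X` shows that for `u, v ∈ X` one of `X_{u,v}`, `X_{v,u}` lies in `X`; taking `Z` to
be another smallest cut compares `X_{u,v}`, `X_{v,w}`, `X_{u,w}` and yields transitivity.
-/

section
variable {V : Type*} {b : Set V → ℝ≥0∞}

lemma lamB_le {u v : V} {Y : Set V} (hu : u ∈ Y) (hv : v ∉ Y) : lamB b u v ≤ b Y :=
  iInf₂_le Y ⟨hu, hv⟩

lemma lamB_comm (h1 : ∀ X : Set V, b Xᶜ = b X) (u v : V) : lamB b u v = lamB b v u := by
  have key : ∀ a c : V, lamB b a c ≤ lamB b c a := fun a c =>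
    le_iInf₂ fun Y hY => h1 Y ▸ lamB_le (Y := Yᶜ) hY.2 (not_not.2 hY.1)
  exact le_antisymm (key u v) (key v u)

lemma IsOptCut.compl (h1 : ∀ X : Set V, b Xᶜ = b X) {u v : V} {Y : Set V}
    (hY : IsOptCut b u v Y) : IsOptCut b v u Yᶜ :=
  ⟨hY.2.1, not_not.2 hY.1, by rw [h1, hY.2.2, lamB_comm h1]⟩

lemma subset_of_isLeast_isOptCut (h2 : ∀ X Y : Set V, b (X ∩ Y) + b (X ∪ Y) ≤ b X + b Y)
    {p q a c : V} {M Z : Set V} (hM : IsLeast {Y | IsOptCut b p q Y} M)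
    (hp : p ∈ Z) (ha : a ∈ Z) (hcM : c ∉ M) (hcZ : c ∉ Z)
    (hZ : b Z ≤ lamB b a c) (hfin : lamB b a c ≠ ⊤) : M ⊆ Z := by
  obtain ⟨⟨hpM, hqM, hbM⟩, hmin⟩ := hM
  have hcup : lamB b a c ≤ b (M ∪ Z) := lamB_le (Or.inr ha) fun h => h.elim hcM hcZ
  have hcap : b (M ∩ Z) ≤ lamB b p q := by
    refine (ENNReal.add_le_add_iff_right hfin).1 ?_
    calc b (M ∩ Z) + lamB b a c ≤ b (M ∩ Z) + b (M ∪ Z) := add_le_add_right hcup _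
      _ ≤ b M + b Z := h2 M Z
      _ ≤ lamB b p q + lamB b a c := by rw [hbM]; exact add_le_add_right hZ _
  have hopt : IsOptCut b p q (M ∩ Z) :=
    ⟨⟨hpM, hp⟩, fun h => hqM h.1, le_antisymm hcap (lamB_le ⟨hpM, hp⟩ fun h => hqM h.1)⟩
  exact (hmin hopt).trans inter_subset_right

lemma isLeast_isOptCut_subset_of_notMem
    (h2 : ∀ X Y : Set V, b (X ∩ Y) + b (X ∪ Y) ≤ b X + b Y) {p q r : V} {M N : Set V}
    (hM : IsLeast {Y | IsOptCut b p q Y} M) (hN : IsLeast {Y | IsOptCut b p r Y} N)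
    (hfin : lamB b p r ≠ ⊤) (hr : r ∉ M) : M ⊆ N :=
  subset_of_isLeast_isOptCut h2 hM hN.1.1 hN.1.1 hr hN.1.2.1 hN.1.2.2.le hfin

lemma isLeast_isOptCut_subset_or_swap_subset (h1 : ∀ X : Set V, b Xᶜ = b X)
    (h2 : ∀ X Y : Set V, b (X ∩ Y) + b (X ∪ Y) ≤ b X + b Y)
    {s t p q : V} {X M N : Set V} (hX : IsOptCut b s t X) (hfin : lamB b s t ≠ ⊤)
    (hM : IsLeast {Y | IsOptCut b p q Y} M) (hN : IsLeast {Y | IsOptCut b q p Y} N)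
    (hp : p ∈ X) (hq : q ∈ X) : M ⊆ X ∨ N ⊆ X := by
  obtain ⟨hsX, htX, hbX⟩ := hX
  by_cases htM : t ∈ M
  · have hNM : N ⊆ Mᶜ := hN.2 (hM.1.compl h1)
    exact Or.inr <| subset_of_isLeast_isOptCut h2 hN hq hsX (fun h => hNM h htM) htX hbX.le hfin
  · exact Or.inl <| subset_of_isLeast_isOptCut h2 hM hp hsX htM htX hbX.le hfin

lemma minCut_not_subset_trans (h1 : ∀ X : Set V, b Xᶜ = b X)
    (h2 : ∀ X Y : Set V, b (X ∩ Y) + b (X ∪ Y) ≤ b X + b Y)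
    (h4 : ∀ u v : V, u ≠ v → lamB b u v < ⊤) {Xm : V → V → Set V}
    (hXm : ∀ u v : V, u ≠ v → IsLeast {Y : Set V | IsOptCut b u v Y} (Xm u v))
    {s t : V} {X : Set V} (hst : s ≠ t) (hX : IsOptCut b s t X) {u v w : V}
    (hu : u ∈ X) (hv : v ∈ X) (huv : u ≠ v) (hvw : v ≠ w)
    (huvX : ¬ Xm u v ⊆ X) (hvwX : ¬ Xm v w ⊆ X) : u ≠ w ∧ ¬ Xm u w ⊆ X := by
  have hvuX : Xm v u ⊆ X :=
    (isLeast_isOptCut_subset_or_swap_subset h1 h2 hX (h4 s t hst).ne (hXm u v huv)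
      (hXm v u huv.symm) hu hv).resolve_left huvX
  have huw : u ≠ w := by
    rintro rfl
    exact hvwX hvuX
  refine ⟨huw, fun huwX => ?_⟩
  obtain ⟨⟨-, hv_uv, hb_uv⟩, -⟩ := hXm u v huv
  obtain ⟨⟨-, hw_vw, hb_vw⟩, -⟩ := hXm v w hvw
  obtain ⟨⟨hu_uw, hw_uw, hb_uw⟩, -⟩ := hXm u w huw
  have hw_uv : w ∈ Xm u v := by_contra fun h => huvX <|
    (isLeast_isOptCut_subset_of_notMem h2 (hXm u v huv) (hXm u w huw) (h4 u w huw).ne h).trans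
      huwX
  have hu_vw : u ∈ Xm v w := by_contra fun h => hvwX <|
    (isLeast_isOptCut_subset_of_notMem h2 (hXm v w hvw) (hXm v u huv.symm)
      (h4 v u huv.symm).ne h).trans hvuX
  have hle : lamB b u w ≤ lamB b u v :=
    calc lamB b u w ≤ b (Xm v w) := lamB_le hu_vw hw_vw
      _ = lamB b w v := by rw [hb_vw, lamB_comm h1]
      _ ≤ b (Xm u v) := lamB_le hw_uv hv_uv
      _ = lamB b u v := hb_uv
  by_cases hv_uw : v ∈ Xm u w
  · exact hvwX <| (subset_of_isLeast_isOptCut h2 (hXm v w hvw) hv_uw hu_uw hw_vw hw_uw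
      hb_uw.le (h4 u w huw).ne).trans huwX
  · exact huvX <| (subset_of_isLeast_isOptCut h2 (hXm u v huv) hu_uw hu_uw hv_uv hv_uw
      (hb_uw.trans_le hle) (h4 u v huv).ne).trans huwX

end

/-- `u ≺_X v` is encoded as `u ≠ v ∧ ¬ Xm u v ⊆ X`. -/
theorem precX_strict_partial_order_general {V : Type*}
    (b : Set V → ℝ≥0∞)
    (h1 : ∀ X : Set V, b Xᶜ = b X)
    (h2 : ∀ X Y : Set V, b (X ∩ Y) + b (X ∪ Y) ≤ b X + b Y)
    (h4 : ∀ u v : V, u ≠ v → lamB b u v < ⊤)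
    (Xm : V → V → Set V)
    (hXm : ∀ u v : V, u ≠ v → IsLeast {Y : Set V | IsOptCut b u v Y} (Xm u v))
    (X : Set V) (hX : ∃ s t : V, s ≠ t ∧ IsOptCut b s t X) :
    (∀ u ∈ X, ¬ (u ≠ u ∧ ¬ Xm u u ⊆ X)) ∧
    (∀ u ∈ X, ∀ v ∈ X, ∀ w ∈ X,
      (u ≠ v ∧ ¬ Xm u v ⊆ X) → (v ≠ w ∧ ¬ Xm v w ⊆ X) → (u ≠ w ∧ ¬ Xm u w ⊆ X)) := by
  obtain ⟨s, t, hst, hX⟩ := hX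
  refine ⟨fun u _ h => h.1 rfl, fun u hu v hv w _ huv hvw => ?_⟩
  exact minCut_not_subset_trans h1 h2 h4 hXm hst hX hu hv huv.1 hvw.1 huv.2 hvw.2

/-- The relation `≺_X` determined by the `⊆`-smallest optimal cuts `Xm` is a strict partial
order on `X`: it is irreflexive and transitive. Here `u ≺_X v` means
`u ≠ v ∧ ¬ X_{u,v} ⊆ X`. -/
theorem precX_strict_partial_order {V : Type*} [Countable V] [Nonempty V]
    (b : Set V → ℝ≥0∞)
    (h0 : ∀ X : Set V, b X = 0 ↔ X = ∅ ∨ X = Set.univ)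
    (h1 : ∀ X : Set V, b Xᶜ = b X)
    (h2 : ∀ X Y : Set V, b (X ∩ Y) + b (X ∪ Y) ≤ b X + b Y)
    (h3m : ∀ X : ℕ → Set V, Monotone X →
      Filter.Tendsto (fun n => b (X n)) Filter.atTop (nhds (b (⋃ n, X n))))
    (h3a : ∀ X : ℕ → Set V, Antitone X →
      Filter.Tendsto (fun n => b (X n)) Filter.atTop (nhds (b (⋂ n, X n))))
    (h4 : ∀ u v : V, u ≠ v → lamB b u v < ⊤)
    (Xm : V → V → Set V)
    (hXm : ∀ u v : V, u ≠ v → IsLeast {Y : Set V | IsOptCut b u v Y} (Xm u v))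
    (X : Set V) (hX : ∃ s t : V, s ≠ t ∧ IsOptCut b s t X) :
    (∀ u ∈ X, ¬ (u ≠ u ∧ ¬ Xm u u ⊆ X)) ∧
    (∀ u ∈ X, ∀ v ∈ X, ∀ w ∈ X,
      (u ≠ v ∧ ¬ Xm u v ⊆ X) → (v ≠ w ∧ ¬ Xm v w ⊆ X) → (u ≠ w ∧ ¬ Xm u w ⊆ X)) :=
  precX_strict_partial_order_general b h1 h2 h4 Xm hXm X hX
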